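/- arXiv:2505.06378 — 11 statements merged into one kernel-verified Lean document; each statement's English description precedes it below -/
import Mathlib

section
/- Let w > 0, α > 0, T > 0, p > 0, e = exp 1, and define u(b) = w·(ln(e + α·b/T) − p·b) on [0, ∞). If α ≥ e·p·T, then b̂ = 1/p − e·T/α is the unique maximizer of u over [0, ∞); if α < e·p·T, then 0 is the unique maximizer of u over [0, ∞). -/
lemma log_sub_log_lt' {x y : ℝ} (hx : 0 < x) (hy : 0 < y) (hne : x ≠ y) :
    Real.log x - Real.log y < (x - y) / y := by
  have h1 : x / y ≠ 1 := by
    intro h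
    rw [div_eq_one_iff_eq hy.ne'] at h
    exact hne h
  have h := Real.log_lt_sub_one_of_pos (div_pos hx hy) h1
  rw [Real.log_div hx.ne' hy.ne'] at h
  have h2 : x / y - 1 = (x - y) / y := by field_simp
  linarith

/-- Optimal follower strategy: if `α ≥ e·p·T` then `b̂ = 1/p − e·T/α` is the unique maximizer of
`u` over `[0, ∞)`; otherwise `0` is the unique maximizer. -/
theorem stmt_4 (w α T p : ℝ) (hw : 0 < w) (hα : 0 < α) (hT : 0 < T) (hp : 0 < p) :
    (Real.exp 1 * p * T ≤ α →
      ((1 / p - Real.exp 1 * T / α) ∈ Set.Ici (0 : ℝ) ∧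
        ∀ b ∈ Set.Ici (0 : ℝ), b ≠ 1 / p - Real.exp 1 * T / α →
          w * (Real.log (Real.exp 1 + α * b / T) - p * b) <
            w * (Real.log (Real.exp 1 + α * (1 / p - Real.exp 1 * T / α) / T)
              - p * (1 / p - Real.exp 1 * T / α)))) ∧
    (α < Real.exp 1 * p * T →
      ∀ b ∈ Set.Ici (0 : ℝ), b ≠ 0 →
        w * (Real.log (Real.exp 1 + α * b / T) - p * b) <
          w * (Real.log (Real.exp 1 + α * 0 / T) - p * 0)) := by
  have he : (0:ℝ) < Real.exp 1 := Real.exp_pos 1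
  constructor
  · intro hge
    set c := 1 / p - Real.exp 1 * T / α with hc
    have hc0 : 0 ≤ c := by
      rw [hc, sub_nonneg, div_le_div_iff₀ hα hp]
      nlinarith
    have hYeq : Real.exp 1 + α * c / T = α / (p * T) := by
      rw [hc]; field_simp; ring
    have hYpos : (0:ℝ) < Real.exp 1 + α * c / T := by
      rw [hYeq]; positivity
    refine ⟨hc0, fun b hb hbne => ?_⟩
    have hb0 : (0:ℝ) ≤ b := hb
    have hXpos : (0:ℝ) < Real.exp 1 + α * b / T := by positivity
    have hne : Real.exp 1 + α * b / T ≠ Real.exp 1 + α * c / T := by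
      intro h
      apply hbne
      have : α * b / T = α * c / T := by linarith
      field_simp at this
      exact this
    have hlog := log_sub_log_lt' hXpos hYpos hne
    have hdiv : (Real.exp 1 + α * b / T - (Real.exp 1 + α * c / T)) /
        (Real.exp 1 + α * c / T) = p * (b - c) := by
      rw [hYeq, hc]; field_simp; ring
    rw [hdiv] at hlog
    have : Real.log (Real.exp 1 + α * b / T) - p * b <
        Real.log (Real.exp 1 + α * c / T) - p * c := by linarith
    exact mul_lt_mul_of_pos_left this hw
  · intro hlt b hb hbne
    have hb0 : (0:ℝ) < b := lt_of_le_of_ne hb (Ne.symm hbne)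
    have hXpos : (0:ℝ) < Real.exp 1 + α * b / T := by positivity
    have hne : Real.exp 1 + α * b / T ≠ Real.exp 1 := by
      have h2 : 0 < α * b / T := by positivity
      intro h; linarith
    have hlog := log_sub_log_lt' hXpos he (by simpa using hne)
    rw [Real.log_exp] at hlog
    have hdiv : (Real.exp 1 + α * b / T - Real.exp 1) / Real.exp 1 = α * b / (T * Real.exp 1) := by
      field_simp; ring
    rw [hdiv] at hlog
    have hstep : α * b / (T * Real.exp 1) < p * b := by
      rw [div_lt_iff₀ (by positivity)]
      nlinarith
    have : Real.log (Real.exp 1 + α * b / T) - p * b <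
        Real.log (Real.exp 1 + α * 0 / T) - p * 0 := by
      simp only [mul_zero, zero_div, add_zero]
      rw [Real.log_exp]
      linarith
    exact mul_lt_mul_of_pos_left this hw
end

section
/- Let A > 0, c > 0, Z > 0, W > 0 and define U(y) = A·(y/(y + W))·(y − Z)·(1/y − c) for y > 0. Then for every y > 0 the second derivative of U at y equals −2·A·(c·W² + Z·(c·W + 1) + W)/(y + W)³, which is strictly negative; consequently U is strictly concave on (0, ∞). -/
/-- Leader utility second derivative and strict concavity on `(0, ∞)`. -/
theorem stmt_6 (A c Z W : ℝ) (hA : 0 < A) (hc : 0 < c) (hZ : 0 < Z) (hW : 0 < W) :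
    (∀ y : ℝ, 0 < y →
      deriv (deriv (fun y : ℝ => A * (y / (y + W)) * (y - Z) * (1 / y - c))) y
        = -2 * A * (c * W ^ 2 + Z * (c * W + 1) + W) / (y + W) ^ 3 ∧
      deriv (deriv (fun y : ℝ => A * (y / (y + W)) * (y - Z) * (1 / y - c))) y < 0) ∧
    StrictConcaveOn ℝ (Set.Ioi (0 : ℝ))
      (fun y : ℝ => A * (y / (y + W)) * (y - Z) * (1 / y - c)) := by
  set K : ℝ := c * W ^ 2 + Z * (c * W + 1) + W with hKdef
  have hKpos : 0 < K := by positivity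
  set f : ℝ → ℝ := fun y => A * (y / (y + W)) * (y - Z) * (1 / y - c) with hf
  set g : ℝ → ℝ := fun y => A * (1 + c * Z + c * W) - A * c * y - A * K / (y + W)
    with hg
  set g' : ℝ → ℝ := fun y => -(A * c) + A * K / (y + W) ^ 2 with hg'
  -- f = g on Ioi 0
  have heq : Set.EqOn f g (Set.Ioi (0 : ℝ)) := by
    intro y hy
    have hy0 : (y : ℝ) ≠ 0 := ne_of_gt hy
    have hyW : y + W ≠ 0 := by have := Set.mem_Ioi.mp hy; positivity
    simp only [hf, hg, hKdef]
    field_simp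
    ring
  have hmem : ∀ y : ℝ, 0 < y → Set.Ioi (0:ℝ) ∈ nhds y := fun y hy =>
    isOpen_Ioi.mem_nhds hy
  have hgderiv : ∀ y : ℝ, 0 < y → HasDerivAt g (g' y) y := by
    intro y hy
    have hyW : y + W ≠ 0 := by positivity
    have h1 : HasDerivAt (fun y : ℝ => y + W) 1 y := (hasDerivAt_id y).add_const W
    have h2 : HasDerivAt (fun y : ℝ => A * K / (y + W))
        ((0 * (y + W) - A * K * 1) / (y + W) ^ 2) y :=
      (hasDerivAt_const y (A * K)).div h1 hyW
    have h3 : HasDerivAt g (0 - A * c * 1 - (0 * (y + W) - A * K * 1) / (y + W) ^ 2) y := by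
      exact ((hasDerivAt_const y (A * (1 + c * Z + c * W))).sub
        ((hasDerivAt_id y).const_mul (A * c))).sub h2
    convert h3 using 1
    simp only [hg']
    field_simp [hg']
    try ring
  have hderiv1 : ∀ y : ℝ, 0 < y → deriv f y = g' y := by
    intro y hy
    have : f =ᶠ[nhds y] g := Filter.eventuallyEq_of_mem (hmem y hy) heq
    rw [this.deriv_eq, (hgderiv y hy).deriv]
  have hg'deriv : ∀ y : ℝ, 0 < y →
      HasDerivAt g' (-2 * A * K / (y + W) ^ 3) y := by
    intro y hy
    have hyW : y + W ≠ 0 := by positivity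
    have h1 : HasDerivAt (fun y : ℝ => y + W) 1 y := (hasDerivAt_id y).add_const W
    have h1p : HasDerivAt (fun y : ℝ => (y + W) ^ 2) (2 * (y + W) ^ 1 * 1) y := h1.pow 2
    have h2 : HasDerivAt (fun y : ℝ => A * K / (y + W) ^ 2)
        ((0 * (y + W) ^ 2 - A * K * (2 * (y + W) ^ 1 * 1)) / ((y + W) ^ 2) ^ 2) y :=
      (hasDerivAt_const y (A * K)).div h1p (pow_ne_zero 2 hyW)
    have h3 : HasDerivAt g'
        (0 + (0 * (y + W) ^ 2 - A * K * (2 * (y + W) ^ 1 * 1)) / ((y + W) ^ 2) ^ 2) y :=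
      (hasDerivAt_const y (-(A * c))).add h2
    convert h3 using 1
    field_simp
    try ring
  have hderiv2 : ∀ y : ℝ, 0 < y → deriv (deriv f) y = -2 * A * K / (y + W) ^ 3 := by
    intro y hy
    have : deriv f =ᶠ[nhds y] g' :=
      Filter.eventuallyEq_of_mem (hmem y hy) (fun z hz => hderiv1 z hz)
    rw [this.deriv_eq, (hg'deriv y hy).deriv]
  have hneg : ∀ y : ℝ, 0 < y → deriv (deriv f) y < 0 := by
    intro y hy
    rw [hderiv2 y hy]
    apply div_neg_of_neg_of_pos
    · nlinarith
    · positivity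
  refine ⟨fun y hy => ⟨hderiv2 y hy, hneg y hy⟩, ?_⟩
  apply strictConcaveOn_of_deriv2_neg (convex_Ioi 0)
  · intro y hy
    have hy0 : (y : ℝ) ≠ 0 := ne_of_gt hy
    have hyW : y + W ≠ 0 := by have := Set.mem_Ioi.mp hy; positivity
    apply ContinuousAt.continuousWithinAt
    have : ContinuousAt f y := by
      apply ContinuousAt.mul
      apply ContinuousAt.mul
      apply ContinuousAt.mul
      · exact continuousAt_const
      · exact (continuousAt_id.div (continuousAt_id.add continuousAt_const) hyW)
      · exact continuousAt_id.sub continuousAt_const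
      · exact ((continuousAt_const.div continuousAt_id hy0)).sub continuousAt_const
    exact this
  · intro y hy
    rw [interior_Ioi] at hy
    simpa [Function.iterate_succ, Function.comp] using hneg y hy
end

section
/- Let A > 0, c > 0, Z > 0, W > 0 and define U(y) = A·(y/(y + W))·(y − Z)·(1/y − c) for y > 0. Set ŷ = √(c²·W² + c·(Z + (1 + Z·c)·W))/c − W. Then ŷ > 0, U′(ŷ) = 0, and ŷ is the unique point y > 0 with U′(y) = 0. -/
lemma deriv_U (A c Z W y : ℝ) (hy : 0 < y) (hW : 0 < W) :
    deriv (fun y : ℝ => A * (y / (y + W)) * (y - Z) * (1 / y - c)) y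
      = A * (-(c * y ^ 2) - 2 * c * W * y + (W + Z + c * Z * W)) / (y + W) ^ 2 := by
  have hyW : 0 < y + W := by linarith
  have hfun : (fun y : ℝ => A * (y / (y + W)) * (y - Z) * (1 / y - c))
      = fun y : ℝ => A * (y / (y + W)) * (y - Z) * (y⁻¹ - c) := by
    funext x; rw [one_div]
  rw [hfun]
  have h1 : HasDerivAt (fun x : ℝ => x / (x + W))
      ((1 * (y + W) - y * 1) / (y + W) ^ 2) y :=
    (hasDerivAt_id y).div ((hasDerivAt_id y).add_const W) hyW.ne'
  have h2 := (h1.const_mul A).mul ((hasDerivAt_id y).sub_const Z)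
  have h3 := h2.mul ((hasDerivAt_inv hy.ne').sub_const c)
  simp only [id_eq, Pi.mul_apply] at h3
  rw [(show HasDerivAt (fun y : ℝ => A * (y / (y + W)) * (y - Z) * (y⁻¹ - c)) _ y from h3).deriv]
  field_simp
  ring

/-- The interior leader best response `ŷ` is positive and is the unique stationary point of
`U(y) = A·(y/(y+W))·(y−Z)·(1/y−c)` on `(0, ∞)`. -/
theorem stmt_7 (A c Z W : ℝ) (hA : 0 < A) (hc : 0 < c) (hZ : 0 < Z) (hW : 0 < W) :
    0 < Real.sqrt (c ^ 2 * W ^ 2 + c * (Z + (1 + Z * c) * W)) / c - W ∧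
    deriv (fun y : ℝ => A * (y / (y + W)) * (y - Z) * (1 / y - c))
      (Real.sqrt (c ^ 2 * W ^ 2 + c * (Z + (1 + Z * c) * W)) / c - W) = 0 ∧
    ∀ y : ℝ, 0 < y →
      deriv (fun y : ℝ => A * (y / (y + W)) * (y - Z) * (1 / y - c)) y = 0 →
      y = Real.sqrt (c ^ 2 * W ^ 2 + c * (Z + (1 + Z * c) * W)) / c - W := by
  set s : ℝ := c ^ 2 * W ^ 2 + c * (Z + (1 + Z * c) * W) with hs_def
  have hs : 0 < s := by rw [hs_def]; nlinarith [mul_pos hc hZ, mul_pos hc hW, mul_pos (mul_pos hc hZ) (mul_pos hc hW), sq_nonneg (c*W)]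
  have hsqrt_pos : 0 < Real.sqrt s := Real.sqrt_pos.mpr hs
  have hsq : Real.sqrt s ^ 2 = s := Real.sq_sqrt hs.le
  have hgt : c * W < Real.sqrt s := by
    rw [show c * W = Real.sqrt ((c*W)^2) from (Real.sqrt_sq (by positivity)).symm]
    apply Real.sqrt_lt_sqrt (by positivity)
    rw [hs_def]; nlinarith [mul_pos hc hZ, mul_pos hc hW, mul_pos (mul_pos hc hZ) (mul_pos hc hW), sq_nonneg (c*W)]
  have hypos : 0 < Real.sqrt s / c - W := by
    rw [sub_pos, lt_div_iff₀ hc]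
    linarith [hgt]
  refine ⟨hypos, ?_, ?_⟩
  · rw [deriv_U A c Z W _ hypos hW]
    have hkey : -(c * (Real.sqrt s / c - W) ^ 2) - 2 * c * W * (Real.sqrt s / c - W)
        + (W + Z + c * Z * W) = 0 := by
      field_simp
      nlinarith [hsq]
    rw [hkey]
    simp
  · intro y hy hd
    rw [deriv_U A c Z W y hy hW] at hd
    have hyW : 0 < y + W := by linarith
    have hN : -(c * y ^ 2) - 2 * c * W * y + (W + Z + c * Z * W) = 0 := by
      rw [div_eq_zero_iff] at hd
      rcases hd with hd | hd
      · rcases mul_eq_zero.mp hd with h | h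
        · exact absurd h hA.ne'
        · exact h
      · exact absurd hd (by positivity)
    have hsqeq : (c * (y + W)) ^ 2 = s := by nlinarith
    have : Real.sqrt s = c * (y + W) := by
      rw [← hsqeq]; exact Real.sqrt_sq (by positivity)
    have : Real.sqrt s / c = y + W := by rw [this]; field_simp
    linarith
end

section
/- Let A > 0, c > 0, Z > 0, W > 0 and define U(y) = A·(y/(y + W))·(y − Z)·(1/y − c) for y > 0. Then ŷ = √(c²·W² + c·(Z + (1 + Z·c)·W))/c − W is the unique maximizer of U over (0, ∞). -/
/-- `ŷ = √(c²·W² + c·(Z + (1 + Z·c)·W))/c − W` is the unique maximizer of the leader utility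
`U(y) = A·(y/(y+W))·(y−Z)·(1/y−c)` over `(0, ∞)`. -/
theorem stmt_8 (A c Z W : ℝ) (hA : 0 < A) (hc : 0 < c) (hZ : 0 < Z) (hW : 0 < W) :
    (Real.sqrt (c ^ 2 * W ^ 2 + c * (Z + (1 + Z * c) * W)) / c - W) ∈ Set.Ioi (0 : ℝ) ∧
    ∀ y ∈ Set.Ioi (0 : ℝ),
      y ≠ Real.sqrt (c ^ 2 * W ^ 2 + c * (Z + (1 + Z * c) * W)) / c - W →
      A * (y / (y + W)) * (y - Z) * (1 / y - c) <
        A * ((Real.sqrt (c ^ 2 * W ^ 2 + c * (Z + (1 + Z * c) * W)) / c - W) /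
              ((Real.sqrt (c ^ 2 * W ^ 2 + c * (Z + (1 + Z * c) * W)) / c - W) + W)) *
          ((Real.sqrt (c ^ 2 * W ^ 2 + c * (Z + (1 + Z * c) * W)) / c - W) - Z) *
          (1 / (Real.sqrt (c ^ 2 * W ^ 2 + c * (Z + (1 + Z * c) * W)) / c - W) - c) := by
  have hD : 0 < c ^ 2 * W ^ 2 + c * (Z + (1 + Z * c) * W) := by positivity
  set k := Real.sqrt (c ^ 2 * W ^ 2 + c * (Z + (1 + Z * c) * W)) with hkdef
  have hk2 : k ^ 2 = c ^ 2 * W ^ 2 + c * (Z + (1 + Z * c) * W) := Real.sq_sqrt hD.le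
  have hk : 0 < k := Real.sqrt_pos.mpr hD
  have hy0 : 0 < k / c - W := by
    rw [sub_pos, lt_div_iff₀ hc]
    have h1 : (0:ℝ) < Z + (1 + Z * c) * W := by positivity
    nlinarith [hk2, hk, mul_pos hc h1]
  refine ⟨hy0, ?_⟩
  intro y hy hne
  have hyp : 0 < y := hy
  have hs : 0 < y + W := by linarith
  have hsW : (k / c - W) + W = k / c := by ring
  have key : ∀ x : ℝ, 0 < x →
      A * (x / (x + W)) * (x - Z) * (1 / x - c)
        = A * ((1 + c * W) + (W + Z) * c)
          - A * (c * (x + W) + (W + Z) * (1 + c * W) / (x + W)) := by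
    intro x hx
    have hxW : (0:ℝ) < x + W := by linarith
    field_simp
    ring
  have hcne : c * (y + W) ≠ k := by
    intro h
    apply hne
    rw [eq_sub_iff_add_eq, eq_div_iff hc.ne']
    linarith [h]
  have hne0 : c * (y + W) - k ≠ 0 := sub_ne_zero.mpr hcne
  have hpos : 0 < (c * (y + W) - k) ^ 2 := by positivity
  have h3 : 2 * k * (y + W) < c * (y + W) ^ 2 + (W + Z) * (1 + c * W) := by
    nlinarith [hpos, hk2]
  have h2 : 2 * k < c * (y + W) + (W + Z) * (1 + c * W) / (y + W) := by
    rw [← sub_pos]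
    have : c * (y + W) + (W + Z) * (1 + c * W) / (y + W) - 2 * k
        = (c * (y + W) ^ 2 + (W + Z) * (1 + c * W) - 2 * k * (y + W)) / (y + W) := by
      field_simp
    rw [this]
    apply div_pos _ hs
    linarith
  have hval : c * ((k / c - W) + W) + (W + Z) * (1 + c * W) / ((k / c - W) + W) = 2 * k := by
    rw [hsW]
    have hck : c * (k / c) = k := by field_simp
    rw [hck]
    have : (W + Z) * (1 + c * W) / (k / c) = (W + Z) * (1 + c * W) * c / k := by
      rw [div_div_eq_mul_div]
    rw [this]
    have habc : (W + Z) * (1 + c * W) * c = k ^ 2 := by rw [hk2]; ring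
    rw [habc]
    field_simp
    ring
  rw [key y hyp, key (k / c - W) hy0, hval]
  have := mul_lt_mul_of_pos_left h2 hA
  linarith
end

section
/- Let c > 0 and Z > 0, and define G(W) = √(c²·W² + c·(Z + (1 + Z·c)·W))/c − W for W ≥ 0. Then G is monotone nondecreasing on [0, ∞); moreover, if c·Z ≠ 1 then G is strictly increasing on [0, ∞). -/
private lemma key_step (c Z : ℝ) (hc : 0 < c) (hZ : 0 < Z) {W W' : ℝ}
    (hW : 0 ≤ W) (hWW : W ≤ W')
    (hkey : 2 * Real.sqrt (c ^ 2 * W ^ 2 + c * (Z + (1 + Z * c) * W)) ≤ 2 * c * W + 1 + Z * c) :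
    Real.sqrt (c ^ 2 * W ^ 2 + c * (Z + (1 + Z * c) * W)) + c * (W' - W)
      ≤ Real.sqrt (c ^ 2 * W' ^ 2 + c * (Z + (1 + Z * c) * W')) := by
  have hW' : 0 ≤ W' := hW.trans hWW
  have hQ : 0 ≤ c ^ 2 * W ^ 2 + c * (Z + (1 + Z * c) * W) := by positivity
  have hs : 0 ≤ Real.sqrt (c ^ 2 * W ^ 2 + c * (Z + (1 + Z * c) * W)) := Real.sqrt_nonneg _
  rw [Real.le_sqrt (by nlinarith)
      (by nlinarith [mul_nonneg hc.le hW', mul_nonneg (mul_nonneg hZ.le (mul_pos hc hc).le) hW',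
        mul_nonneg (mul_nonneg hc.le hc.le) (mul_nonneg hW' hW')])]
  have hsq := Real.sq_sqrt hQ
  nlinarith [mul_nonneg (mul_nonneg hc.le (sub_nonneg.2 hWW))
    (sub_nonneg.2 hkey), Real.sqrt_nonneg (c ^ 2 * W ^ 2 + c * (Z + (1 + Z * c) * W))]

private lemma key_bound (c Z : ℝ) (hc : 0 < c) (hZ : 0 < Z) {W : ℝ} (hW : 0 ≤ W) :
    2 * Real.sqrt (c ^ 2 * W ^ 2 + c * (Z + (1 + Z * c) * W)) ≤ 2 * c * W + 1 + Z * c := by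
  have h : Real.sqrt (c ^ 2 * W ^ 2 + c * (Z + (1 + Z * c) * W)) ≤ (2 * c * W + 1 + Z * c) / 2 := by
    rw [show (2 * c * W + 1 + Z * c) / 2 = Real.sqrt (((2 * c * W + 1 + Z * c) / 2) ^ 2) from
      (Real.sqrt_sq (by positivity)).symm]
    apply Real.sqrt_le_sqrt
    nlinarith [sq_nonneg (1 - Z * c)]
  linarith

private lemma key_bound_strict (c Z : ℝ) (hc : 0 < c) (hZ : 0 < Z) (hne : c * Z ≠ 1)
    {W : ℝ} (hW : 0 ≤ W) :
    2 * Real.sqrt (c ^ 2 * W ^ 2 + c * (Z + (1 + Z * c) * W)) < 2 * c * W + 1 + Z * c := by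
  have h : Real.sqrt (c ^ 2 * W ^ 2 + c * (Z + (1 + Z * c) * W)) < (2 * c * W + 1 + Z * c) / 2 := by
    rw [show (2 * c * W + 1 + Z * c) / 2 = Real.sqrt (((2 * c * W + 1 + Z * c) / 2) ^ 2) from
      (Real.sqrt_sq (by positivity)).symm]
    apply Real.sqrt_lt_sqrt (by nlinarith [mul_nonneg hc.le hW, mul_nonneg (mul_nonneg hZ.le (mul_pos hc hc).le) hW, mul_nonneg (mul_nonneg hc.le hc.le) (mul_nonneg hW hW)])
    have : (1 - Z * c) ^ 2 > 0 := by
      have h1 : Z * c ≠ 1 := by rwa [mul_comm] at hne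
      exact pow_two_pos_of_ne_zero (sub_ne_zero.2 fun h => h1 (by linarith))
    nlinarith
  linarith

/-- Monotonicity of the RSU best-response function
`G(W) = √(c²·W² + c·(Z + (1 + Z·c)·W))/c − W` on `[0, ∞)`, strict when `c·Z ≠ 1`. -/
theorem stmt_10 (c Z : ℝ) (hc : 0 < c) (hZ : 0 < Z) :
    MonotoneOn (fun W : ℝ =>
        Real.sqrt (c ^ 2 * W ^ 2 + c * (Z + (1 + Z * c) * W)) / c - W)
      (Set.Ici (0 : ℝ)) ∧
    (c * Z ≠ 1 →
      StrictMonoOn (fun W : ℝ =>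
          Real.sqrt (c ^ 2 * W ^ 2 + c * (Z + (1 + Z * c) * W)) / c - W)
        (Set.Ici (0 : ℝ))) := by
  constructor
  · intro W hW W' hW' hWW
    simp only [Set.mem_Ici] at hW hW'
    have h := key_step c Z hc hZ hW hWW (key_bound c Z hc hZ hW)
    have e : c * (W' - W) / c = W' - W := by field_simp
    have h2 : Real.sqrt (c ^ 2 * W ^ 2 + c * (Z + (1 + Z * c) * W)) / c + (W' - W)
        ≤ Real.sqrt (c ^ 2 * W' ^ 2 + c * (Z + (1 + Z * c) * W')) / c := by
      rw [← e, ← add_div]; gcongr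
    simp only
    linarith
  · intro hne W hW W' hW' hWW
    simp only [Set.mem_Ici] at hW hW'
    have hb := key_bound_strict c Z hc hZ hne hW
    have h := key_step c Z hc hZ hW hWW.le hb.le
    -- strictness: since the bound is strict and W < W', improve
    have hQ : 0 ≤ c ^ 2 * W ^ 2 + c * (Z + (1 + Z * c) * W) := by positivity
    have hstrict : Real.sqrt (c ^ 2 * W ^ 2 + c * (Z + (1 + Z * c) * W)) + c * (W' - W)
        < Real.sqrt (c ^ 2 * W' ^ 2 + c * (Z + (1 + Z * c) * W')) := by
      rw [Real.lt_sqrt (by nlinarith [Real.sqrt_nonneg (c ^ 2 * W ^ 2 + c * (Z + (1 + Z * c) * W))])]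
      have hsq := Real.sq_sqrt hQ
      nlinarith [mul_pos (mul_pos hc (sub_pos.2 hWW)) (sub_pos.2 hb)]
    have e : c * (W' - W) / c = W' - W := by field_simp
    have h2 : Real.sqrt (c ^ 2 * W ^ 2 + c * (Z + (1 + Z * c) * W)) / c + (W' - W)
        < Real.sqrt (c ^ 2 * W' ^ 2 + c * (Z + (1 + Z * c) * W')) / c := by
      rw [← e, ← add_div]; gcongr
    simp only
    linarith
end

section
/- Let c > 0, Z > 0, W ≥ 0, and λ > 1, and define G(W) = √(c²·W² + c·(Z + (1 + Z·c)·W))/c − W. Then λ·G(W) > G(λ·W). -/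
/-- Scalability of the RSU best-response function: `λ·G(W) > G(λ·W)` for `λ > 1`. -/
theorem stmt_11 (c Z W lam : ℝ) (hc : 0 < c) (hZ : 0 < Z) (hW : 0 ≤ W) (hlam : 1 < lam) :
    Real.sqrt (c ^ 2 * (lam * W) ^ 2 + c * (Z + (1 + Z * c) * (lam * W))) / c - lam * W <
      lam * (Real.sqrt (c ^ 2 * W ^ 2 + c * (Z + (1 + Z * c) * W)) / c - W) := by
  have hlam0 : (0:ℝ) < lam := lt_trans one_pos hlam
  have harg : c ^ 2 * (lam * W) ^ 2 + c * (Z + (1 + Z * c) * (lam * W)) <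
      lam ^ 2 * (c ^ 2 * W ^ 2 + c * (Z + (1 + Z * c) * W)) := by
    nlinarith [mul_pos (mul_pos hc hZ) (show (0:ℝ) < lam ^ 2 - 1 by nlinarith),
      mul_nonneg (mul_nonneg (mul_nonneg hc.le hW) (by positivity : (0:ℝ) ≤ 1 + Z * c))
        (show (0:ℝ) ≤ lam ^ 2 - lam by nlinarith)]
  have hnn : 0 ≤ c ^ 2 * (lam * W) ^ 2 + c * (Z + (1 + Z * c) * (lam * W)) := by
    have := mul_pos hc hZ
    nlinarith [mul_nonneg (mul_nonneg hc.le hW) (mul_nonneg hZ.le hc.le),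
      mul_nonneg hc.le (mul_nonneg hlam0.le hW), sq_nonneg (c * (lam * W))]
  have hs : Real.sqrt (c ^ 2 * (lam * W) ^ 2 + c * (Z + (1 + Z * c) * (lam * W))) <
      Real.sqrt (lam ^ 2 * (c ^ 2 * W ^ 2 + c * (Z + (1 + Z * c) * W))) :=
    Real.sqrt_lt_sqrt hnn harg
  rw [Real.sqrt_mul (sq_nonneg lam), Real.sqrt_sq hlam0.le] at hs
  have hdiv : Real.sqrt (c ^ 2 * (lam * W) ^ 2 + c * (Z + (1 + Z * c) * (lam * W))) / c <
      lam * Real.sqrt (c ^ 2 * W ^ 2 + c * (Z + (1 + Z * c) * W)) / c := by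
    gcongr
  have : lam * (Real.sqrt (c ^ 2 * W ^ 2 + c * (Z + (1 + Z * c) * W)) / c - W)
      = lam * Real.sqrt (c ^ 2 * W ^ 2 + c * (Z + (1 + Z * c) * W)) / c - lam * W := by
    ring
  linarith [hdiv]
end

section
/- Fix R ≥ 1 and, for each r ∈ {1,…,R}, parameters c_r > 0 and Z_r > 0. For a vector Y ∈ ℝ^R with all components positive, set W_r(Y) = Σ_{l ≠ r} Y_l, and define 𝒢_r(Y) = √(c_r²·W_r(Y)² + c_r·(Z_r + (1 + Z_r·c_r)·W_r(Y)))/c_r − W_r(Y). Then 𝒢 is a standard interference function: (i) 𝒢_r(Y) > 0 for all r; (ii) if Y ≤ Y′ componentwise (both with positive components) then 𝒢_r(Y) ≤ 𝒢_r(Y′) for all r; and (iii) for every λ > 1 and all r, λ·𝒢_r(Y) > 𝒢_r(λ·Y). -/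
open Finset

/-- Sum of the reciprocal prices of the RSUs other than `r`. -/
def sgW {R : ℕ} (r : Fin R) (Y : Fin R → ℝ) : ℝ := ∑ l ∈ univ.erase r, Y l

/-- RSU `r`'s best-response reciprocal price given the other RSUs' reciprocal prices. -/
noncomputable def sgG {R : ℕ} (c Z : Fin R → ℝ) (r : Fin R) (Y : Fin R → ℝ) : ℝ :=
  Real.sqrt ((c r) ^ 2 * (sgW r Y) ^ 2 + c r * (Z r + (1 + Z r * c r) * sgW r Y)) / c r
    - sgW r Y

lemma sqb (a z W : ℝ) (ha : 0 < a) (hz : 0 < z) (hW : 0 ≤ W) :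
    Real.sqrt (a^2*W^2 + a*(z+(1+z*a)*W)) ≤ a*W + (1+a*z)/2 := by
  rw [show a*W + (1+a*z)/2 = Real.sqrt ((a*W + (1+a*z)/2)^2) from
    (Real.sqrt_sq (by positivity)).symm]
  apply Real.sqrt_le_sqrt
  nlinarith [sq_nonneg (1 - a*z)]

lemma gmono (a z W W' : ℝ) (ha : 0 < a) (hz : 0 < z) (hW : 0 ≤ W) (hWW' : W ≤ W') :
    Real.sqrt (a^2*W^2 + a*(z+(1+z*a)*W))/a - W ≤
    Real.sqrt (a^2*W'^2 + a*(z+(1+z*a)*W'))/a - W' := by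
  have hW' : 0 ≤ W' := hW.trans hWW'
  set s := Real.sqrt (a^2*W^2 + a*(z+(1+z*a)*W)) with hs
  have hsnn : 0 ≤ s := Real.sqrt_nonneg _
  have hssq : s^2 = a^2*W^2 + a*(z+(1+z*a)*W) := Real.sq_sqrt (by positivity)
  have hb : s ≤ a*W + (1+a*z)/2 := sqb a z W ha hz hW
  have key : s + a*(W'-W) ≤ Real.sqrt (a^2*W'^2 + a*(z+(1+z*a)*W')) := by
    rw [show s + a*(W'-W) = Real.sqrt ((s + a*(W'-W))^2) from
      (Real.sqrt_sq (by nlinarith)).symm]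
    apply Real.sqrt_le_sqrt
    nlinarith [mul_nonneg (mul_nonneg ha.le (sub_nonneg.2 hWW')) (sub_nonneg.2 hb)]
  rw [div_sub' ha.ne', div_sub' ha.ne', div_le_div_iff₀ ha ha]
  nlinarith [key]

lemma gscal (a z W lam : ℝ) (ha : 0 < a) (hz : 0 < z) (hW : 0 ≤ W) (hl : 1 < lam) :
    Real.sqrt (a^2*(lam*W)^2 + a*(z+(1+z*a)*(lam*W)))/a - lam*W <
    lam * (Real.sqrt (a^2*W^2 + a*(z+(1+z*a)*W))/a - W) := by
  have h1 : Real.sqrt (a^2*(lam*W)^2 + a*(z+(1+z*a)*(lam*W))) <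
      lam * Real.sqrt (a^2*W^2 + a*(z+(1+z*a)*W)) := by
    rw [show lam * Real.sqrt (a^2*W^2 + a*(z+(1+z*a)*W)) =
        Real.sqrt (lam^2 * (a^2*W^2 + a*(z+(1+z*a)*W))) by
      rw [Real.sqrt_mul (by positivity), Real.sqrt_sq (by linarith)]]
    apply Real.sqrt_lt_sqrt (by positivity)
    have hlam : 0 < lam := by linarith
    nlinarith [mul_pos (mul_pos ha hz) (show (0:ℝ) < lam*lam - 1 by nlinarith),
      mul_nonneg (mul_nonneg (mul_nonneg ha.le hW) (by positivity : (0:ℝ) ≤ 1+z*a))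
        (by nlinarith : (0:ℝ) ≤ lam*(lam-1))]
  rw [mul_sub]
  have h2 : Real.sqrt (a^2*(lam*W)^2 + a*(z+(1+z*a)*(lam*W)))/a <
      lam * (Real.sqrt (a^2*W^2 + a*(z+(1+z*a)*W))/a) := by
    rw [← mul_div_assoc, div_lt_div_iff_of_pos_right ha]
    exact h1
  linarith

/-- The RSU best-response map is a standard interference function: positiveness,
monotonicity, and scalability. -/
theorem stmt_13 (R : ℕ) (hR : 1 ≤ R) (c Z : Fin R → ℝ)
    (hc : ∀ r, 0 < c r) (hZ : ∀ r, 0 < Z r) :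
    (∀ Y : Fin R → ℝ, (∀ i, 0 < Y i) → ∀ r, 0 < sgG c Z r Y) ∧
    (∀ Y Y' : Fin R → ℝ, (∀ i, 0 < Y i) → (∀ i, 0 < Y' i) → (∀ i, Y i ≤ Y' i) →
      ∀ r, sgG c Z r Y ≤ sgG c Z r Y') ∧
    (∀ Y : Fin R → ℝ, (∀ i, 0 < Y i) → ∀ lam : ℝ, 1 < lam →
      ∀ r, sgG c Z r (fun i => lam * Y i) < lam * sgG c Z r Y) := by

  have Wnn : ∀ (Y : Fin R → ℝ), (∀ i, 0 < Y i) → ∀ r : Fin R, 0 ≤ sgW r Y := by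
    intro Y hY r
    exact Finset.sum_nonneg fun i _ => (hY i).le
  refine ⟨?_, ?_, ?_⟩
  · intro Y hY r
    have := Wnn Y hY r
    unfold sgG
    rw [sub_pos, lt_div_iff₀ (hc r)]
    have h : 0 ≤ sgW r Y * c r := mul_nonneg this (hc r).le
    rw [show sgW r Y * c r = Real.sqrt ((sgW r Y * c r)^2) from (Real.sqrt_sq h).symm]
    apply Real.sqrt_lt_sqrt (by positivity)
    nlinarith [mul_pos (hc r) (hZ r),
      mul_nonneg (mul_nonneg (hc r).le (hc r).le) (mul_nonneg (hZ r).le this)]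
  · intro Y Y' hY hY' hle r
    have hW : sgW r Y ≤ sgW r Y' := Finset.sum_le_sum fun i _ => hle i
    exact gmono (c r) (Z r) (sgW r Y) (sgW r Y') (hc r) (hZ r) (Wnn Y hY r) hW
  · intro Y hY lam hlam r
    have hWs : sgW r (fun i => lam * Y i) = lam * sgW r Y := by
      unfold sgW; rw [Finset.mul_sum]
    have := gscal (c r) (Z r) (sgW r Y) lam (hc r) (hZ r) (Wnn Y hY r) hlam
    unfold sgG
    rw [hWs]
    exact this
end

section
/- Let n ≥ 1 and let f map vectors in ℝ^n with all components positive to vectors in ℝ^n with all components positive. Assume f is monotone (for all positive x, x′ with x ≤ x′ componentwise, f(x) ≤ f(x′) componentwise) and scalable (for all positive x and all λ > 1, f(λ·x) < λ·f(x) componentwise). Then f has at most one fixed point among vectors with all components positive. -/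
/-- Key step: under the hypotheses, any fixed point `y` is componentwise
dominated by any other fixed point `x`. -/
theorem stmt_14_aux (n : ℕ) (hn : 1 ≤ n) (f : (Fin n → ℝ) → (Fin n → ℝ))
    (hmono : ∀ x x' : Fin n → ℝ, (∀ i, 0 < x i) → (∀ i, 0 < x' i) →
      (∀ i, x i ≤ x' i) → ∀ i, f x i ≤ f x' i)
    (hscal : ∀ x : Fin n → ℝ, (∀ i, 0 < x i) → ∀ lam : ℝ, 1 < lam →
      ∀ i, f (fun j => lam * x j) i < lam * f x i)
    (x y : Fin n → ℝ) (hx : ∀ i, 0 < x i) (hy : ∀ i, 0 < y i)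
    (hfx : f x = x) (hfy : f y = y) : ∀ i, y i ≤ x i := by
  have hne : (Finset.univ : Finset (Fin n)).Nonempty := ⟨⟨0, hn⟩, Finset.mem_univ _⟩
  set L := Finset.univ.sup' hne (fun i => y i / x i) with hLdef
  obtain ⟨j, -, hj⟩ := Finset.exists_mem_eq_sup' hne (fun i => y i / x i)
  have hle : ∀ i, y i / x i ≤ L := fun i =>
    Finset.le_sup' (fun i => y i / x i) (Finset.mem_univ i)
  by_cases hL : L ≤ 1
  · intro i
    have := (div_le_one (hx i)).mp ((hle i).trans hL)
    exact this
  · exfalso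
    push_neg at hL
    have hLpos : 0 < L := lt_trans one_pos hL
    have key : ∀ i, y i ≤ L * x i := fun i => by
      have := (div_le_iff₀ (hx i)).mp (hle i)
      linarith
    have hLx : ∀ i, 0 < L * x i := fun i => mul_pos hLpos (hx i)
    have h1 : f y j ≤ f (fun k => L * x k) j := hmono y _ hy hLx key j
    have h2 : f (fun k => L * x k) j < L * f x j := hscal x hx L hL j
    have hyj : y j = L * x j := by
      have h : y j / x j = L := hj.symm
      exact (div_eq_iff (hx j).ne').mp h
    have : y j < L * x j := by
      calc y j = f y j := by rw [hfy]
        _ ≤ f (fun k => L * x k) j := h1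
        _ < L * f x j := h2
        _ = L * x j := by rw [hfx]
    linarith [hyj]

/-- A monotone and scalable positive map on the positive orthant has at most one
fixed point among vectors with all components positive. -/
theorem stmt_14 (n : ℕ) (hn : 1 ≤ n) (f : (Fin n → ℝ) → (Fin n → ℝ))
    (hpos : ∀ x : Fin n → ℝ, (∀ i, 0 < x i) → ∀ i, 0 < f x i)
    (hmono : ∀ x x' : Fin n → ℝ, (∀ i, 0 < x i) → (∀ i, 0 < x' i) →
      (∀ i, x i ≤ x' i) → ∀ i, f x i ≤ f x' i)
    (hscal : ∀ x : Fin n → ℝ, (∀ i, 0 < x i) → ∀ lam : ℝ, 1 < lam →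
      ∀ i, f (fun j => lam * x j) i < lam * f x i) :
    ∀ x y : Fin n → ℝ, (∀ i, 0 < x i) → (∀ i, 0 < y i) →
      f x = x → f y = y → x = y := by
  intro x y hx hy hfx hfy
  funext i
  exact le_antisymm
    (stmt_14_aux n hn f hmono hscal y x hy hx hfy hfx i)
    (stmt_14_aux n hn f hmono hscal x y hx hy hfx hfy i)
end

section
/- Fix R ≥ 1 and, for each r ∈ {1,…,R}, parameters c_r > 0 and Z_r > 0. Define 𝒢_r(Y) = √(c_r²·W_r(Y)² + c_r·(Z_r + (1 + Z_r·c_r)·W_r(Y)))/c_r − W_r(Y) with W_r(Y) = Σ_{l ≠ r} Y_l for vectors Y ∈ ℝ^R with all components positive. Then 𝒢 has at most one fixed point Y* with all components positive; i.e., the leaders' equilibrium reciprocal-price vector of the Stackelberg game, when it exists, is unique. -/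
open Finset

/-- Scalar version of the best-response map. -/
noncomputable def sgg (c Z W : ℝ) : ℝ :=
  Real.sqrt (c ^ 2 * W ^ 2 + c * (Z + (1 + Z * c) * W)) / c - W

lemma sgG_eq {R : ℕ} (c Z : Fin R → ℝ) (r : Fin R) (Y : Fin R → ℝ) :
    sgG c Z r Y = sgg (c r) (Z r) (sgW r Y) := rfl

lemma sgA_pos {c Z W : ℝ} (hc : 0 < c) (hZ : 0 < Z) (hW : 0 ≤ W) :
    0 < c ^ 2 * W ^ 2 + c * (Z + (1 + Z * c) * W) := by
  nlinarith [sq_nonneg (c * W), mul_pos hc hZ, mul_nonneg hc.le hW,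
    mul_nonneg (mul_nonneg (mul_nonneg hZ.le hc.le) hc.le) hW]

lemma sgg_mono {c Z W W' : ℝ} (hc : 0 < c) (hZ : 0 < Z) (hW : 0 ≤ W) (h : W ≤ W') :
    sgg c Z W ≤ sgg c Z W' := by
  have hW' : 0 ≤ W' := hW.trans h
  have hA0 : 0 < c ^ 2 * W ^ 2 + c * (Z + (1 + Z * c) * W) := sgA_pos hc hZ hW
  have hA'0 : 0 < c ^ 2 * W' ^ 2 + c * (Z + (1 + Z * c) * W') := sgA_pos hc hZ hW'
  set A := c ^ 2 * W ^ 2 + c * (Z + (1 + Z * c) * W) with hA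
  set A' := c ^ 2 * W' ^ 2 + c * (Z + (1 + Z * c) * W') with hA'
  set s := Real.sqrt A with hs
  have hs0 : 0 ≤ s := Real.sqrt_nonneg _
  have hs2 : s ^ 2 = A := Real.sq_sqrt hA0.le
  have hX : 0 ≤ 2 * c * W + 1 + Z * c := by
    nlinarith [mul_nonneg hc.le hW, mul_pos hZ hc]
  -- key bound : 2s ≤ 2cW + 1 + Zc
  have h4 : (2 * s) ^ 2 ≤ (2 * c * W + 1 + Z * c) ^ 2 := by
    rw [hA] at hs2
    nlinarith [sq_nonneg (1 - Z * c)]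
  have hkey : 2 * s ≤ 2 * c * W + 1 + Z * c := by
    nlinarith [h4, hX, hs0]
  have hle : s + c * (W' - W) ≤ Real.sqrt A' := by
    have hx : 0 ≤ s + c * (W' - W) := by
      have := mul_nonneg hc.le (sub_nonneg.2 h); linarith
    rw [← Real.sqrt_sq hx]
    apply Real.sqrt_le_sqrt
    have hint : 0 ≤ (c * (W' - W)) * ((2 * c * W + 1 + Z * c) - 2 * s) :=
      mul_nonneg (mul_nonneg hc.le (sub_nonneg.2 h)) (by linarith)
    rw [hA', hA] at *
    nlinarith [hint]
  unfold sgg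
  rw [← hA, ← hA', ← hs]
  have h1 : s / c ≤ Real.sqrt A' / c - (W' - W) := by
    rw [le_sub_iff_add_le, div_add' _ _ _ (ne_of_gt hc), div_le_div_iff₀ hc hc]
    nlinarith [hle]
  linarith [h1]

lemma sgg_scal {c Z W t : ℝ} (hc : 0 < c) (hZ : 0 < Z) (hW : 0 ≤ W) (ht : 1 < t) :
    sgg c Z (t * W) < t * sgg c Z W := by
  have ht0 : 0 < t := lt_trans one_pos ht
  have hA0 : 0 < c ^ 2 * W ^ 2 + c * (Z + (1 + Z * c) * W) := sgA_pos hc hZ hW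
  set A := c ^ 2 * W ^ 2 + c * (Z + (1 + Z * c) * W) with hA
  have hcZ : 0 < c * Z := mul_pos hc hZ
  have ht2 : 0 < t ^ 2 - 1 := by nlinarith
  have htt : 0 ≤ t ^ 2 - t := by nlinarith
  have h1 : c * Z < t ^ 2 * (c * Z) := by nlinarith [mul_pos hcZ ht2]
  have hcW : 0 ≤ c * ((1 + Z * c) * W) := by
    nlinarith [mul_nonneg hc.le hW,
      mul_nonneg (mul_nonneg (mul_nonneg hZ.le hc.le) hc.le) hW]
  have h2 : c * ((1 + Z * c) * (t * W)) ≤ t ^ 2 * (c * ((1 + Z * c) * W)) := by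
    nlinarith [mul_nonneg hcW htt]
  have hlt : c ^ 2 * (t * W) ^ 2 + c * (Z + (1 + Z * c) * (t * W)) < t ^ 2 * A := by
    rw [hA]; nlinarith [h1, h2]
  have hsq : Real.sqrt (c ^ 2 * (t * W) ^ 2 + c * (Z + (1 + Z * c) * (t * W)))
      < t * Real.sqrt A := by
    calc Real.sqrt (c ^ 2 * (t * W) ^ 2 + c * (Z + (1 + Z * c) * (t * W)))
        < Real.sqrt (t ^ 2 * A) := Real.sqrt_lt_sqrt (by positivity) hlt
      _ = t * Real.sqrt A := by
          rw [Real.sqrt_mul (by positivity), Real.sqrt_sq ht0.le]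
  unfold sgg
  rw [← hA]
  have h3 : Real.sqrt (c ^ 2 * (t * W) ^ 2 + c * (Z + (1 + Z * c) * (t * W))) / c
      < t * Real.sqrt A / c := by gcongr
  rw [mul_sub, mul_comm t (Real.sqrt A / c), mul_div_assoc] at *
  nlinarith [h3]

/-- Uniqueness of the leaders' equilibrium: the RSU best-response map has at most one
fixed point with all components positive. -/
theorem stmt_15 (R : ℕ) (hR : 1 ≤ R) (c Z : Fin R → ℝ)
    (hc : ∀ r, 0 < c r) (hZ : ∀ r, 0 < Z r) :
    ∀ Y Y' : Fin R → ℝ, (∀ i, 0 < Y i) → (∀ i, 0 < Y' i) →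
      (∀ r, sgG c Z r Y = Y r) → (∀ r, sgG c Z r Y' = Y' r) → Y = Y' := by
  have hne0 : Nonempty (Fin R) := ⟨⟨0, hR⟩⟩
  have hne : (univ : Finset (Fin R)).Nonempty := univ_nonempty
  -- key : any fixed point dominates any other
  have key : ∀ Y Y' : Fin R → ℝ, (∀ i, 0 < Y i) → (∀ i, 0 < Y' i) →
      (∀ r, sgG c Z r Y = Y r) → (∀ r, sgG c Z r Y' = Y' r) → ∀ i, Y' i ≤ Y i := by
    intro Y Y' hY hY' hFY hFY' i0
    by_contra hcon
    push_neg at hcon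
    set t := (univ : Finset (Fin R)).sup' hne (fun i => Y' i / Y i) with htdef
    obtain ⟨r, -, hr⟩ := Finset.exists_mem_eq_sup' hne (fun i => Y' i / Y i)
    have hle : ∀ i, Y' i ≤ t * Y i := by
      intro i
      have h := Finset.le_sup' (fun i => Y' i / Y i) (mem_univ i)
      rw [← htdef] at h
      calc Y' i = (Y' i / Y i) * Y i := (div_mul_cancel₀ _ (hY i).ne').symm
        _ ≤ t * Y i := mul_le_mul_of_nonneg_right h (hY i).le
    have ht1 : 1 < t := by
      have h := Finset.le_sup' (fun i => Y' i / Y i) (mem_univ i0)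
      rw [← htdef] at h
      have : 1 < Y' i0 / Y i0 := (one_lt_div (hY i0)).2 hcon
      exact lt_of_lt_of_le this h
    have hYr : Y' r = t * Y r := by
      have hrr : t = Y' r / Y r := hr
      rw [hrr, div_mul_cancel₀ _ (hY r).ne']
    have hW0 : 0 ≤ sgW r Y := Finset.sum_nonneg (fun l _ => (hY l).le)
    have hW0' : 0 ≤ sgW r Y' := Finset.sum_nonneg (fun l _ => (hY' l).le)
    have hWle : sgW r Y' ≤ t * sgW r Y := by
      unfold sgW
      rw [Finset.mul_sum]
      exact Finset.sum_le_sum (fun l _ => hle l)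
    have step1 : Y' r ≤ sgg (c r) (Z r) (t * sgW r Y) := by
      rw [← hFY' r, sgG_eq]
      exact sgg_mono (hc r) (hZ r) hW0' hWle
    have step2 : sgg (c r) (Z r) (t * sgW r Y) < t * sgg (c r) (Z r) (sgW r Y) :=
      sgg_scal (hc r) (hZ r) hW0 ht1
    have step3 : t * sgg (c r) (Z r) (sgW r Y) = Y' r := by
      rw [← sgG_eq, hFY r, hYr]
    linarith
  intro Y Y' hY hY' hFY hFY'
  funext i
  exact le_antisymm (key Y' Y hY' hY hFY' hFY i) (key Y Y' hY hY' hFY hFY' i)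
end

section
/- Let w > 0, α > 0, T > 0, p > 0, e = exp 1, and suppose α ≥ e·p·T. Define u(b) = w·(ln(e + α·b/T) − p·b) on [0, ∞) and b̂ = 1/p − e·T/α. Then for every b ∈ [0, ∞) with b ≠ b̂, u(b) < u(b̂); in particular no unilateral deviation of the follower from b̂ can increase its utility. -/
/-- Follower-level equilibrium condition: when `α ≥ e·p·T`, no unilateral deviation of the
follower from `b̂ = 1/p − e·T/α` within `[0, ∞)` can increase its utility. -/
theorem stmt_16 (w α T p : ℝ) (hw : 0 < w) (hα : 0 < α) (hT : 0 < T) (hp : 0 < p)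
    (hcond : Real.exp 1 * p * T ≤ α) :
    ∀ b ∈ Set.Ici (0 : ℝ), b ≠ 1 / p - Real.exp 1 * T / α →
      w * (Real.log (Real.exp 1 + α * b / T) - p * b) <
        w * (Real.log (Real.exp 1 + α * (1 / p - Real.exp 1 * T / α) / T)
          - p * (1 / p - Real.exp 1 * T / α)) := by
  intro b hb hne
  have hb0 : (0:ℝ) ≤ b := hb
  have hE : (0:ℝ) < Real.exp 1 := Real.exp_pos 1
  set E := Real.exp 1 with hEdef
  have hy : (0:ℝ) < E + α * b / T := by
    have : (0:ℝ) ≤ α * b / T := by positivity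
    linarith
  have hy0 : (0:ℝ) < α / (p * T) := by positivity
  have hbhat : E + α * (1 / p - E * T / α) / T = α / (p * T) := by
    field_simp
    ring
  have hdiv : (E + α * b / T) / (α / (p * T)) = E * p * T / α + p * b := by
    field_simp
  have hne' : (E + α * b / T) / (α / (p * T)) ≠ 1 := by
    intro h
    rw [hdiv] at h
    apply hne
    field_simp
    field_simp at h
    linear_combination h
  have key := Real.log_lt_sub_one_of_pos (div_pos hy hy0) hne'
  rw [Real.log_div (ne_of_gt hy) (ne_of_gt hy0), hdiv] at key
  have hpb : p * (1 / p - E * T / α) = 1 - E * p * T / α := by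
    field_simp
  rw [hbhat, hpb]
  have : Real.log (E + α * b / T) - p * b < Real.log (α / (p * T)) - (1 - E * p * T / α) := by
    linarith
  exact mul_lt_mul_of_pos_left this hw
end

section
/- Let A > 0, c > 0, Z > 0, W > 0, define U(y) = A·(y/(y + W))·(y − Z)·(1/y − c) for y > 0, and set ŷ = √(c²·W² + c·(Z + (1 + Z·c)·W))/c − W. Then for every y > 0 with y ≠ ŷ, U(y) < U(ŷ); in particular no unilateral deviation of the leader from ŷ can increase its utility. -/
lemma stmt_17_aux (A c Z W t y : ℝ) (hA : 0 < A) (hc : 0 < c) (hZ : 0 < Z) (hW : 0 < W)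
    (ht : 0 < t) (hkey : c * (t + W) ^ 2 = c * W ^ 2 + Z + (1 + Z * c) * W)
    (hy : 0 < y) (hne : y ≠ t) :
    A * (y / (y + W)) * (y - Z) * (1 / y - c) < A * (t / (t + W)) * (t - Z) * (1 / t - c) := by
  have hyW : 0 < y + W := by linarith
  have htW : 0 < t + W := by linarith
  have hU : ∀ x : ℝ, 0 < x →
      A * (x / (x + W)) * (x - Z) * (1 / x - c) = A * ((x - Z) * (1 - c * x)) / (x + W) := by
    intro x hx
    have hx0 : x ≠ 0 := hx.ne'
    have hxW : x + W ≠ 0 := by positivity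
    field_simp
  rw [hU y hy, hU t ht]
  have hg : A * ((t - Z) * (1 - c * t)) * (y + W)
      = A * ((y - Z) * (1 - c * y)) * (t + W) + A * c * (y - t) ^ 2 * (t + W) := by
    linear_combination (A * (y - t)) * hkey
  have hq : 0 < A * c * (y - t) ^ 2 * (t + W) := by
    have h0 : y - t ≠ 0 := sub_ne_zero.2 hne
    positivity
  rw [div_lt_div_iff₀ hyW htW]
  linarith

/-- Leader-level equilibrium condition: no unilateral deviation of the leader from `ŷ` within
`(0, ∞)` can increase its utility. -/
theorem stmt_17 (A c Z W : ℝ) (hA : 0 < A) (hc : 0 < c) (hZ : 0 < Z) (hW : 0 < W) :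
    ∀ y : ℝ, 0 < y →
      y ≠ Real.sqrt (c ^ 2 * W ^ 2 + c * (Z + (1 + Z * c) * W)) / c - W →
      A * (y / (y + W)) * (y - Z) * (1 / y - c) <
        A * ((Real.sqrt (c ^ 2 * W ^ 2 + c * (Z + (1 + Z * c) * W)) / c - W) /
              ((Real.sqrt (c ^ 2 * W ^ 2 + c * (Z + (1 + Z * c) * W)) / c - W) + W)) *
          ((Real.sqrt (c ^ 2 * W ^ 2 + c * (Z + (1 + Z * c) * W)) / c - W) - Z) *
          (1 / (Real.sqrt (c ^ 2 * W ^ 2 + c * (Z + (1 + Z * c) * W)) / c - W) - c) := by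
  intro y hy hne
  have harg : (0:ℝ) ≤ c ^ 2 * W ^ 2 + c * (Z + (1 + Z * c) * W) := by positivity
  set s := Real.sqrt (c ^ 2 * W ^ 2 + c * (Z + (1 + Z * c) * W)) with hs_def
  have hs2 : s ^ 2 = c ^ 2 * W ^ 2 + c * (Z + (1 + Z * c) * W) := Real.sq_sqrt harg
  have hsgt : c * W < s := by
    have h1 : c * W = Real.sqrt ((c * W) ^ 2) := (Real.sqrt_sq (by positivity)).symm
    rw [h1, hs_def]
    apply Real.sqrt_lt_sqrt (by positivity)
    nlinarith [mul_pos hc hZ, mul_pos hc hW, mul_pos (mul_pos hZ (mul_pos hc hc)) hW]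
  have ht : 0 < s / c - W := by
    rw [lt_sub_iff_add_lt, zero_add, lt_div_iff₀ hc]
    linarith
  have hkey : c * ((s / c - W) + W) ^ 2 = c * W ^ 2 + Z + (1 + Z * c) * W := by
    have h2 : (s / c - W) + W = s / c := by ring
    rw [h2]
    field_simp
    linear_combination hs2
  exact stmt_17_aux A c Z W _ y hA hc hZ hW ht hkey hy hne
end
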